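/- arXiv:2506.00797 — 2 statements merged into one kernel-verified Lean document; each statement's English description precedes it below -/
import Mathlib

section
/- Let {π^k} be a sequence of deterministic action-dependent policies generated by Algorithm AD-MPI, associated with an ADG G_d = (N, E_d), and assume the singleton-argmax assumption holds. Let V° : S → ℝ be the eventual constant value of the sequence {V^{π^k}} (which exists, since the sequence is monotone nondecreasing and the set of deterministic policies is finite), and let G_c = (N, E_c) be a CG of the function Q^{V°}. If N_d(i) = N_c(i^{[+]}) for every i ∈ N, then the policy sequence converges in finitely many terms: there exist K ∈ ℕ and a deterministic action-dependent policy π° with π^k_i = π°_i for all i ∈ N and all k ≥ K, and π° is globally optimal, i.e., V^{π°} = V° = V^*. -/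
/-- `N_c(S)`: the set of neighbors of a set `S` of vertices in an undirected graph,
excluding `S` itself. -/
def ncSet {n : ℕ} (Gc : SimpleGraph (Fin n)) (S : Set (Fin n)) : Set (Fin n) :=
  (⋃ j ∈ S, Gc.neighborSet j) \ S

/-- `G_c` is a coordination graph (CG) of `Q : S × A → ℝ`: there is a family of local
value functions `q i j`, one for each edge `(i,j) ∈ E_c` (with `i < j`, so each
undirected edge is counted once; the family vanishes off the edges), such that
`Q(s,a) = Σ_{(i,j)∈E_c} q i j (s, a_i, a_j)`. -/
def IsCG {n : ℕ} {St : Type*} {A : Fin n → Type*} (Gc : SimpleGraph (Fin n))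
    (Q : St → (∀ i, A i) → ℝ) : Prop :=
  ∃ q : (i : Fin n) → (j : Fin n) → St → A i → A j → ℝ,
    (∀ i j, ¬(i < j ∧ Gc.Adj i j) → ∀ s ai aj, q i j s ai aj = 0) ∧
    ∀ s a, Q s a = ∑ i, ∑ j, q i j s (a i) (a j)

/-- The one-step lookahead value `Q^V(s,a) = r(s,a) + γ Σ_{s'} P(s'|s,a) V(s')`. -/
def QV {n : ℕ} {St : Type*} [Fintype St] {A : Fin n → Type*}
    (P : St → (∀ i, A i) → St → ℝ) (r : St → (∀ i, A i) → ℝ) (γ : ℝ)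
    (V : St → ℝ) : St → (∀ i, A i) → ℝ :=
  fun s a => r s a + γ * ∑ s', P s a s' * V s'

/-- The joint action induced by a deterministic action-dependent policy `π`, with the
coordinates in `F` clamped to the values of `a'`: the agents outside `F` evaluate their
policies in increasing index order (well defined since `Ed j i → j < i`), each `π i`
conditioning on the actions of its in-neighbors `N_d(i) = {j | Ed j i}`. Taking
`F = ∅` yields the induced joint action `ā_π(s)`. -/
def indAct {n : ℕ} {St : Type*} {A : Fin n → Type*}
    (Ed : Fin n → Fin n → Prop) [DecidableRel Ed]
    (hEd : ∀ i j : Fin n, Ed j i → j < i)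
    (π : (i : Fin n) → St → ((j : {j : Fin n // Ed j i}) → A j.1) → A i)
    (F : Finset (Fin n)) (a' : ∀ i, A i) (s : St) : (i : Fin n) → A i
  | i =>
    if i ∈ F then a' i
    else π i s (fun j => indAct Ed hEd π F a' s j.1)
termination_by i => (i : ℕ)
decreasing_by exact hEd i j.1 j.2

/-- The full joint action built from clamped values `c` on `N_d(i)` and a value `ai`
for agent `i` (coordinates outside `N_d[i]` are filled arbitrarily; they are irrelevant
when this vector is used to clamp only the coordinates in `N_d[i]`). -/
noncomputable def cvec {n : ℕ} {A : Fin n → Type*} [∀ i, Nonempty (A i)]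
    (Ed : Fin n → Fin n → Prop) [DecidableRel Ed] (i : Fin n)
    (c : (j : {j : Fin n // Ed j i}) → A j.1) (ai : A i) : ∀ j, A j :=
  fun j =>
    if h : Ed j i then c ⟨j, h⟩
    else if h : j = i then cast (congrArg A h.symm) ai
    else Classical.arbitrary (A j)

/-- `(πseq, Vseq)` is an execution of Algorithm AD-MPI:
* policy evaluation: `Vseq k` is the value function `V^{π^k}`, i.e. the fixed point of
  `T_{π^k} V (s) = Q^V(s, ā_{π^k}(s))`;
* policy iteration: for each agent `i` (in increasing order), `πseq (k+1) i (s, c)`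
  maximizes `a_i ↦ Q^{V^{π^k}}(s, c, a_i, ā_{π^{k,i}_{-N_d[i]}}(s, c, a_i))`, where
  `π^{k,i}` uses the already-updated policies `π^{k+1}_j` for `j < i` and `π^k_j`
  otherwise, and the coordinates in `N_d[i]` are clamped to `(c, a_i)`. -/
noncomputable def ADMPI {n : ℕ} {St : Type*} [Fintype St] {A : Fin n → Type*}
    [∀ i, Fintype (A i)] [∀ i, Nonempty (A i)]
    (P : St → (∀ i, A i) → St → ℝ) (r : St → (∀ i, A i) → ℝ) (γ : ℝ)
    (Ed : Fin n → Fin n → Prop) [DecidableRel Ed]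
    (hEd : ∀ i j : Fin n, Ed j i → j < i)
    (πseq : ℕ → (i : Fin n) → St → ((j : {j : Fin n // Ed j i}) → A j.1) → A i)
    (Vseq : ℕ → St → ℝ) : Prop :=
  (∀ (k : ℕ) (s : St) (a' : ∀ i, A i),
      Vseq k s = QV P r γ (Vseq k) s (indAct Ed hEd (πseq k) ∅ a' s)) ∧
  (∀ (k : ℕ) (i : Fin n) (s : St) (c : (j : {j : Fin n // Ed j i}) → A j.1)
      (ai : A i),
      QV P r γ (Vseq k) s
        (indAct Ed hEd (fun j => if j < i then πseq (k+1) j else πseq k j)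
          (Finset.univ.filter fun j => Ed j i ∨ j = i) (cvec Ed i c ai) s)
      ≤ QV P r γ (Vseq k) s
        (indAct Ed hEd (fun j => if j < i then πseq (k+1) j else πseq k j)
          (Finset.univ.filter fun j => Ed j i ∨ j = i)
          (cvec Ed i c (πseq (k+1) i s c)) s))

/-- The singleton-argmax assumption for Algorithm AD-MPI: for all `k ≥ 1`, `i`, `s`,
and clamped neighbor actions `c`, the set
`argmax_{a_i} Q^{V^{π^k}}(s, c, a_i, ā_{π^{k,i}_{-N_d[i]}}(s, c, a_i))` is a
singleton. -/
noncomputable def SingletonArgmax {n : ℕ} {St : Type*} [Fintype St] {A : Fin n → Type*}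
    [∀ i, Fintype (A i)] [∀ i, Nonempty (A i)]
    (P : St → (∀ i, A i) → St → ℝ) (r : St → (∀ i, A i) → ℝ) (γ : ℝ)
    (Ed : Fin n → Fin n → Prop) [DecidableRel Ed]
    (hEd : ∀ i j : Fin n, Ed j i → j < i)
    (πseq : ℕ → (i : Fin n) → St → ((j : {j : Fin n // Ed j i}) → A j.1) → A i)
    (Vseq : ℕ → St → ℝ) : Prop :=
  ∀ k ≥ 1, ∀ (i : Fin n) (s : St) (c : (j : {j : Fin n // Ed j i}) → A j.1)
    (ai₁ ai₂ : A i),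
    (∀ b : A i,
      QV P r γ (Vseq k) s
        (indAct Ed hEd (fun j => if j < i then πseq (k+1) j else πseq k j)
          (Finset.univ.filter fun j => Ed j i ∨ j = i) (cvec Ed i c b) s)
      ≤ QV P r γ (Vseq k) s
        (indAct Ed hEd (fun j => if j < i then πseq (k+1) j else πseq k j)
          (Finset.univ.filter fun j => Ed j i ∨ j = i) (cvec Ed i c ai₁) s)) →
    (∀ b : A i,
      QV P r γ (Vseq k) s
        (indAct Ed hEd (fun j => if j < i then πseq (k+1) j else πseq k j)
          (Finset.univ.filter fun j => Ed j i ∨ j = i) (cvec Ed i c b) s)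
      ≤ QV P r γ (Vseq k) s
        (indAct Ed hEd (fun j => if j < i then πseq (k+1) j else πseq k j)
          (Finset.univ.filter fun j => Ed j i ∨ j = i) (cvec Ed i c ai₂) s)) →
    ai₁ = ai₂

/-!
Write `Q^{V°} = ∑_{u < v} q_{uv}` along the edges of `G_c`. Agent `i`'s improvement objective
splits into the edges with upper endpoint `< i`, which its own action does not affect, and those
with upper endpoint `≥ i`, which depend only on `N_d(i) ∪ {j ≥ i}` because
`N_d(i) = N_c(i^{[+]})`; this set is closed under in-neighbours of the agents `j > i`. So once
`V^{π^k} = V°` and the agents `j > i` have stopped changing, agent `i`'s objective changes by a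
constant from one round to the next, and by the singleton-argmax assumption its policy stops
changing too; downward induction on `i` gives convergence.

For the limit `π°` the same splitting gives, by downward induction on `t`, that the agents `≥ t`
answering any `a_{<t}` through `π°` do at least as well as `a_{≥ t}` on the edges with upper
endpoint `≥ t`. At `t = 0` this says that `ā_{π°}(s)` maximizes `Q^{V°}(s, ·)`, so `V°` is a fixed
point of the Bellman optimality operator, a contraction, and `V° = V^*`.
-/

open Finset

section ADMPIConvergence

variable {n : ℕ} {St : Type*} {A : Fin n → Type*}

abbrev ADPolicy (Ed : Fin n → Fin n → Prop) (St : Type*) (A : Fin n → Type*) :=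
  (i : Fin n) → St → ((j : {j : Fin n // Ed j i}) → A j.1) → A i

section IndAct

variable {Ed : Fin n → Fin n → Prop} [DecidableRel Ed] {hEd : ∀ i j : Fin n, Ed j i → j < i}
  {π π' : ADPolicy Ed St A} {F F' : Finset (Fin n)} {a a' : ∀ i, A i} {s : St}

theorem indAct_of_mem {i : Fin n} (hi : i ∈ F) : indAct Ed hEd π F a s i = a i := by
  rw [indAct.eq_1, if_pos hi]

theorem indAct_of_notMem {i : Fin n} (hi : i ∉ F) :
    indAct Ed hEd π F a s i = π i s (fun j => indAct Ed hEd π F a s j.1) := by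
  rw [indAct.eq_1, if_neg hi]

theorem indAct_congr_on (D : Set (Fin n)) (hF : ∀ v ∈ D, v ∈ F ↔ v ∈ F')
    (ha : ∀ v ∈ D, v ∈ F → a v = a' v)
    (hπ : ∀ v ∈ D, v ∉ F → π v s = π' v s ∧ ∀ j, Ed j v → j ∈ D) :
    ∀ v ∈ D, indAct Ed hEd π F a s v = indAct Ed hEd π' F' a' s v := by
  intro v
  induction v using WellFoundedLT.induction with
  | _ v ih =>
    intro hv
    by_cases hvF : v ∈ F
    · rw [indAct_of_mem hvF, indAct_of_mem ((hF v hv).1 hvF), ha v hv hvF]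
    · obtain ⟨hπv, hpar⟩ := hπ v hv hvF
      rw [indAct_of_notMem hvF, indAct_of_notMem (mt (hF v hv).2 hvF), hπv]
      congr 1
      funext j
      exact ih j (hEd v j j.2) (hpar j j.2)

theorem indAct_congr_clamped (h : ∀ v ∈ F, a v = a' v) :
    indAct Ed hEd π F a s = indAct Ed hEd π F a' s :=
  funext fun v => indAct_congr_on Set.univ (fun _ _ => Iff.rfl) (fun v _ hv => h v hv)
    (fun _ _ _ => ⟨rfl, fun _ _ => trivial⟩) v trivial

theorem indAct_indAct_of_subset (h : F ⊆ F') :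
    indAct Ed hEd π F' (indAct Ed hEd π F a s) s = indAct Ed hEd π F a s := by
  funext v
  induction v using WellFoundedLT.induction with
  | _ v ih =>
    by_cases hv : v ∈ F'
    · exact indAct_of_mem hv
    · rw [indAct_of_notMem hv, indAct_of_notMem (fun hvF => hv (h hvF))]
      congr 1
      funext j
      exact ih j (hEd v j j.2)

/-- Clamping agent `i` to the action it would choose itself changes nothing. -/
theorem indAct_below_succ (i : Fin n) :
    indAct Ed hEd π {v | (v : ℕ) < i} a s =
      indAct Ed hEd π {v | (v : ℕ) < i + 1} (Function.update a i (π i s fun j => a j)) s := by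
  rw [← indAct_indAct_of_subset (F' := {v | (v : ℕ) < i + 1}) fun v => by
    simp only [mem_filter, mem_univ, true_and]
    omega]
  refine indAct_congr_clamped fun v hv => ?_
  simp only [mem_filter, mem_univ, true_and] at hv
  rcases Nat.lt_succ_iff_lt_or_eq.mp hv with hvi | hvi
  · rw [indAct_of_mem (by simpa using hvi), Function.update_of_ne (by omega)]
  · obtain rfl : v = i := Fin.ext hvi
    rw [indAct_of_notMem (by simp), Function.update_self]
    congr 1
    funext j
    exact indAct_of_mem (by simpa using hEd v j j.2)

end IndAct

section EdgeSum

variable (q : (i j : Fin n) → St → A i → A j → ℝ) (s : St)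

/-- The part of `∑ u, ∑ v, q u v` carried by the edges whose upper endpoint `v` lies in `T`. -/
def edgeSum (T : Finset (Fin n)) (a : ∀ i, A i) : ℝ :=
  ∑ v ∈ T, ∑ u, q u v s (a u) (a v)

theorem edgeSum_univ (a : ∀ i, A i) : edgeSum q s univ a = ∑ u, ∑ v, q u v s (a u) (a v) :=
  Finset.sum_comm

theorem edgeSum_below_add_from (t : ℕ) (a : ∀ i, A i) :
    edgeSum q s {v | (v : ℕ) < t} a + edgeSum q s {v | t ≤ (v : ℕ)} a = edgeSum q s univ a := by
  simp only [edgeSum, ← not_lt]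
  exact sum_filter_add_sum_filter_not _ _ _

theorem edgeSum_from_eq_add (i : Fin n) (a : ∀ i, A i) :
    edgeSum q s {v | (i : ℕ) ≤ v} a =
      edgeSum q s {i} a + edgeSum q s {v | (i : ℕ) + 1 ≤ v} a := by
  have hsplit : ({v | (i : ℕ) ≤ v} : Finset (Fin n)) =
      insert i ({v | (i : ℕ) + 1 ≤ v} : Finset (Fin n)) := by
    ext v
    simp only [mem_filter, mem_univ, true_and, mem_insert, Fin.ext_iff]
    omega
  rw [edgeSum, hsplit, sum_insert (by simp), edgeSum, edgeSum, sum_singleton]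

theorem edgeSum_from_of_le {t : ℕ} (ht : n ≤ t) (a : ∀ i, A i) :
    edgeSum q s {v | t ≤ (v : ℕ)} a = 0 := by
  rw [edgeSum, filter_false_of_mem fun v _ => by omega, sum_empty]

variable {q} {Gc : SimpleGraph (Fin n)}

theorem edgeSum_congr (hq : ∀ u v, ¬(u < v ∧ Gc.Adj u v) → ∀ s x y, q u v s x y = 0)
    {T : Finset (Fin n)} {a a' : ∀ i, A i} (hT : ∀ v ∈ T, a v = a' v)
    (hnbr : ∀ u v, v ∈ T → u < v → Gc.Adj u v → a u = a' u) :
    edgeSum q s T a = edgeSum q s T a' := by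
  refine sum_congr rfl fun v hv => sum_congr rfl fun u _ => ?_
  by_cases huv : u < v ∧ Gc.Adj u v
  · rw [hnbr u v hv huv.1 huv.2, hT v hv]
  · rw [hq u v huv, hq u v huv]

variable {Ed : Fin n → Fin n → Prop}

theorem ed_iff_of_ncSet (hNd : ∀ k : Fin n, {j : Fin n | Ed j k} = ncSet Gc {j : Fin n | k ≤ j})
    {j i : Fin n} : Ed j i ↔ j < i ∧ ∃ m, i ≤ m ∧ Gc.Adj j m := by
  have h : j ∈ {j | Ed j i} ↔ j ∈ ncSet Gc {m | i ≤ m} := by rw [hNd i]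
  simp only [ncSet, Set.mem_ofPred_eq, Set.mem_sdiff, Set.mem_iUnion,
    SimpleGraph.mem_neighborSet, exists_prop, not_le] at h
  rw [h, and_comm]
  simp only [SimpleGraph.adj_comm]

theorem ed_or_le_of_ed (hNd : ∀ k : Fin n, {j : Fin n | Ed j k} = ncSet Gc {j : Fin n | k ≤ j})
    {i u m : Fin n} (hmu : Ed m u) (hiu : i ≤ u) : Ed m i ∨ i ≤ m := by
  by_cases him : i ≤ m
  · exact Or.inr him
  · obtain ⟨-, l, hul, hadj⟩ := (ed_iff_of_ncSet hNd).1 hmu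
    exact Or.inl ((ed_iff_of_ncSet hNd).2 ⟨lt_of_not_ge him, l, hiu.trans hul, hadj⟩)

theorem edgeSum_from_congr (hq : ∀ u v, ¬(u < v ∧ Gc.Adj u v) → ∀ s x y, q u v s x y = 0)
    (hNd : ∀ k : Fin n, {j : Fin n | Ed j k} = ncSet Gc {j : Fin n | k ≤ j})
    {i : Fin n} {a a' : ∀ i, A i} (h : ∀ u, Ed u i ∨ i ≤ u → a u = a' u) :
    edgeSum q s {v | (i : ℕ) ≤ v} a = edgeSum q s {v | (i : ℕ) ≤ v} a' := by
  refine edgeSum_congr s hq (fun v hv => h v (Or.inr (by simpa using hv))) fun u v hv huv hadj => ?_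
  simp only [mem_filter, mem_univ, true_and] at hv
  refine h u ?_
  by_cases hiu : i ≤ u
  · exact Or.inr hiu
  · exact Or.inl ((ed_iff_of_ncSet hNd).2 ⟨lt_of_not_ge hiu, v, hv, hadj⟩)

end EdgeSum

section StepAct

/-- The joint action `(c, b, ā_{π_{-N_d[i]}}(s, c, b))` maximized over `b` by agent `i` in
AD-MPI. -/
noncomputable def stepAct [∀ i, Nonempty (A i)] (Ed : Fin n → Fin n → Prop) [DecidableRel Ed]
    (hEd : ∀ i j : Fin n, Ed j i → j < i) (π : ADPolicy Ed St A) (i : Fin n) (s : St)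
    (c : (j : {j : Fin n // Ed j i}) → A j.1) (b : A i) : ∀ j, A j :=
  indAct Ed hEd π {j | Ed j i ∨ j = i} (cvec Ed i c b) s

/-- The policy `π^{k,i}` of AD-MPI, for `π = π^k` and `π' = π^{k+1}`. -/
def splice {Ed : Fin n → Fin n → Prop} (π π' : ADPolicy Ed St A) (i : Fin n) : ADPolicy Ed St A :=
  fun j => if j < i then π' j else π j

variable [∀ i, Nonempty (A i)] {Ed : Fin n → Fin n → Prop} [DecidableRel Ed]
  {hEd : ∀ i j : Fin n, Ed j i → j < i}

theorem cvec_self {i : Fin n} (hi : ¬Ed i i) (c : (j : {j : Fin n // Ed j i}) → A j.1)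
    (b : A i) : cvec Ed i c b i = b := by
  rw [cvec, dif_neg hi, dif_pos rfl, cast_eq]

theorem cvec_of_ed {i j : Fin n} (c : (j : {j : Fin n // Ed j i}) → A j.1) (b : A i)
    (h : Ed j i) : cvec Ed i c b j = c ⟨j, h⟩ := by
  rw [cvec, dif_pos h]

theorem lt_of_ed_or_le_of_notMem {i v : Fin n} (hv : Ed v i ∨ i ≤ v)
    (hvF : v ∉ ({j | Ed j i ∨ j = i} : Finset (Fin n))) : i < v := by
  simp only [mem_filter, mem_univ, true_and, not_or] at hvF
  exact lt_of_le_of_ne (hv.resolve_left hvF.1) (Ne.symm hvF.2)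

variable {q : (i j : Fin n) → St → A i → A j → ℝ} {Gc : SimpleGraph (Fin n)}
  {Q : St → (∀ i, A i) → ℝ}

theorem exists_const_add_edgeSum_stepAct
    (hq : ∀ u v, ¬(u < v ∧ Gc.Adj u v) → ∀ s x y, q u v s x y = 0)
    (hQ : ∀ s a, Q s a = ∑ u, ∑ v, q u v s (a u) (a v)) (π : ADPolicy Ed St A) (i : Fin n)
    (s : St) (c : (j : {j : Fin n // Ed j i}) → A j.1) :
    ∃ C, ∀ b, Q s (stepAct Ed hEd π i s c b) =
      C + edgeSum q s {v | (i : ℕ) ≤ v} (stepAct Ed hEd π i s c b) := by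
  have hbelow : ∀ b b', ∀ u < i, stepAct Ed hEd π i s c b u = stepAct Ed hEd π i s c b' u := by
    intro b b'
    refine indAct_congr_on {u | u < i} (fun _ _ => Iff.rfl) (fun v hv hvF => ?_)
      fun v hv _ => ⟨rfl, fun j hj => (hEd v j hj).trans hv⟩
    have hvi : Ed v i := by simpa [(Set.mem_ofPred.1 hv).ne] using hvF
    rw [cvec_of_ed c b hvi, cvec_of_ed c b' hvi]
  refine ⟨edgeSum q s {v | (v : ℕ) < i} (stepAct Ed hEd π i s c (Classical.arbitrary _)),
    fun b => ?_⟩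
  rw [hQ, ← edgeSum_univ, ← edgeSum_below_add_from _ _ i]
  congr 1
  refine edgeSum_congr s hq (fun v hv => hbelow _ _ v ?_) fun u v hv huv _ => hbelow _ _ u ?_
  · simpa using hv
  · exact huv.trans (by simpa using hv)

theorem edgeSum_from_stepAct_congr
    (hq : ∀ u v, ¬(u < v ∧ Gc.Adj u v) → ∀ s x y, q u v s x y = 0)
    (hNd : ∀ k : Fin n, {j : Fin n | Ed j k} = ncSet Gc {j : Fin n | k ≤ j})
    {π π' : ADPolicy Ed St A} {i : Fin n} (hπ : ∀ j, i < j → π j = π' j) (s : St)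
    (c : (j : {j : Fin n // Ed j i}) → A j.1) (b : A i) :
    edgeSum q s {v | (i : ℕ) ≤ v} (stepAct Ed hEd π i s c b) =
      edgeSum q s {v | (i : ℕ) ≤ v} (stepAct Ed hEd π' i s c b) := by
  refine edgeSum_from_congr s hq hNd (indAct_congr_on {u | Ed u i ∨ i ≤ u}
    (fun _ _ => Iff.rfl) (fun _ _ _ => rfl) fun v hv hvF => ?_)
  have hiv := lt_of_ed_or_le_of_notMem hv hvF
  exact ⟨congrFun (hπ v hiv) s, fun j hj => ed_or_le_of_ed hNd hj hiv.le⟩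

theorem edgeSum_from_stepAct_eq
    (hq : ∀ u v, ¬(u < v ∧ Gc.Adj u v) → ∀ s x y, q u v s x y = 0)
    (hNd : ∀ k : Fin n, {j : Fin n | Ed j k} = ncSet Gc {j : Fin n | k ≤ j})
    (π : ADPolicy Ed St A) (i : Fin n) (s : St) (a : ∀ i, A i) (b : A i) :
    edgeSum q s {v | (i : ℕ) ≤ v} (stepAct Ed hEd π i s (fun j => a j) b) =
      edgeSum q s {v | (i : ℕ) ≤ v}
        (indAct Ed hEd π {v | (v : ℕ) < i + 1} (Function.update a i b) s) := by
  refine edgeSum_from_congr s hq hNd (indAct_congr_on {u | Ed u i ∨ i ≤ u}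
    (fun v hv => ?_) (fun v _ hvF => ?_) fun v hv hvF => ?_)
  · have hvi : Ed v i ↔ (v : ℕ) < i := ⟨fun h => hEd i v h, fun h => hv.resolve_right (by
      simpa using h)⟩
    simp only [mem_filter, mem_univ, true_and, hvi, Fin.ext_iff]
    omega
  · simp only [mem_filter, mem_univ, true_and] at hvF
    rcases hvF with hvi | rfl
    · rw [cvec_of_ed _ _ hvi, Function.update_of_ne (hEd i v hvi).ne]
    · rw [cvec_self fun h => lt_irrefl v (hEd v v h), Function.update_self]
  · exact ⟨rfl, fun j hj => ed_or_le_of_ed hNd hj (lt_of_ed_or_le_of_notMem hv hvF).le⟩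

end StepAct

section Optimality

variable [∀ i, Nonempty (A i)] {Ed : Fin n → Fin n → Prop} [DecidableRel Ed]
  {hEd : ∀ i j : Fin n, Ed j i → j < i} {q : (i j : Fin n) → St → A i → A j → ℝ}
  {Gc : SimpleGraph (Fin n)} {Q : St → (∀ i, A i) → ℝ} {π : ADPolicy Ed St A}

theorem edgeSum_from_le_of_stepOptimal
    (hq : ∀ u v, ¬(u < v ∧ Gc.Adj u v) → ∀ s x y, q u v s x y = 0)
    (hNd : ∀ k : Fin n, {j : Fin n | Ed j k} = ncSet Gc {j : Fin n | k ≤ j})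
    (hQ : ∀ s a, Q s a = ∑ u, ∑ v, q u v s (a u) (a v))
    (hopt : ∀ i s c b, Q s (stepAct Ed hEd π i s c b) ≤ Q s (stepAct Ed hEd π i s c (π i s c)))
    (s : St) (t : ℕ) (a : ∀ i, A i) :
    edgeSum q s {v | t ≤ (v : ℕ)} a ≤
      edgeSum q s {v | t ≤ (v : ℕ)} (indAct Ed hEd π {v | (v : ℕ) < t} a s) := by
  induction hd : n - t generalizing t a with
  | zero => rw [edgeSum_from_of_le _ _ (by omega), edgeSum_from_of_le _ _ (by omega)]
  | succ d ih =>
    obtain ⟨i, rfl⟩ : ∃ i : Fin n, (i : ℕ) = t := ⟨⟨t, by omega⟩, rfl⟩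
    set c : (j : {j : Fin n // Ed j i}) → A j.1 := fun j => a j
    set x := indAct Ed hEd π {v | (v : ℕ) < i + 1} a s
    obtain ⟨C, hC⟩ := exists_const_add_edgeSum_stepAct (hEd := hEd) hq hQ π i s c
    have himp := hopt i s c (a i)
    rw [hC, hC, add_le_add_iff_left] at himp
    have hxa : edgeSum q s {i} x = edgeSum q s {i} a := by
      refine edgeSum_congr s hq (fun v hv => ?_) fun u v hv huv _ => ?_
      · exact indAct_of_mem (by simp [mem_singleton.1 hv])
      · rw [mem_singleton.1 hv] at huv
        exact indAct_of_mem (by simpa using Nat.lt_succ_of_lt huv)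
    calc edgeSum q s {v | (i : ℕ) ≤ v} a
        = edgeSum q s {i} a + edgeSum q s {v | (i : ℕ) + 1 ≤ v} a := edgeSum_from_eq_add q s i a
      _ ≤ edgeSum q s {i} a + edgeSum q s {v | (i : ℕ) + 1 ≤ v} x := by
          gcongr
          exact ih _ a (by omega)
      _ = edgeSum q s {v | (i : ℕ) ≤ v} x := by rw [← hxa, edgeSum_from_eq_add]
      _ = edgeSum q s {v | (i : ℕ) ≤ v} (stepAct Ed hEd π i s c (a i)) := by
          rw [edgeSum_from_stepAct_eq hq hNd, Function.update_eq_self]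
      _ ≤ edgeSum q s {v | (i : ℕ) ≤ v} (stepAct Ed hEd π i s c (π i s c)) := himp
      _ = edgeSum q s {v | (i : ℕ) ≤ v} (indAct Ed hEd π {v | (v : ℕ) < i} a s) := by
          rw [edgeSum_from_stepAct_eq hq hNd, indAct_below_succ]

theorem le_indAct_of_stepOptimal
    (hq : ∀ u v, ¬(u < v ∧ Gc.Adj u v) → ∀ s x y, q u v s x y = 0)
    (hNd : ∀ k : Fin n, {j : Fin n | Ed j k} = ncSet Gc {j : Fin n | k ≤ j})
    (hQ : ∀ s a, Q s a = ∑ u, ∑ v, q u v s (a u) (a v))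
    (hopt : ∀ i s c b, Q s (stepAct Ed hEd π i s c b) ≤ Q s (stepAct Ed hEd π i s c (π i s c)))
    (s : St) (a : ∀ i, A i) : Q s a ≤ Q s (indAct Ed hEd π ∅ a s) := by
  have h := edgeSum_from_le_of_stepOptimal hq hNd hQ hopt s 0 a
  have hall : ({v | 0 ≤ (v : ℕ)} : Finset (Fin n)) = univ := filter_true_of_mem fun _ _ => by omega
  have hnone : ({v | (v : ℕ) < 0} : Finset (Fin n)) = ∅ := filter_false_of_mem fun _ _ => by omega
  rwa [hall, hnone, edgeSum_univ, edgeSum_univ, ← hQ, ← hQ] at h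

end Optimality

section Stabilization

variable [∀ i, Nonempty (A i)] {Ed : Fin n → Fin n → Prop} [DecidableRel Ed]
  {hEd : ∀ i j : Fin n, Ed j i → j < i} {q : (i j : Fin n) → St → A i → A j → ℝ}
  {Gc : SimpleGraph (Fin n)} {Q : St → (∀ i, A i) → ℝ}

/-- Agent `i`'s objectives in the two rounds differ only on edges with upper endpoint `< i`,
which its own action does not affect, hence by a constant. -/
theorem eq_of_stepOptimal_of_forall_gt
    (hq : ∀ u v, ¬(u < v ∧ Gc.Adj u v) → ∀ s x y, q u v s x y = 0)
    (hNd : ∀ k : Fin n, {j : Fin n | Ed j k} = ncSet Gc {j : Fin n | k ≤ j})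
    (hQ : ∀ s a, Q s a = ∑ u, ∑ v, q u v s (a u) (a v))
    {π₀ π₁ π₂ : ADPolicy Ed St A} {i : Fin n} (hgt : ∀ j, i < j → π₁ j = π₀ j) (s : St)
    (c : (j : {j : Fin n // Ed j i}) → A j.1)
    (hopt₁ : ∀ b, Q s (stepAct Ed hEd (splice π₀ π₁ i) i s c b) ≤
      Q s (stepAct Ed hEd (splice π₀ π₁ i) i s c (π₁ i s c)))
    (hopt₂ : ∀ b, Q s (stepAct Ed hEd (splice π₁ π₂ i) i s c b) ≤
      Q s (stepAct Ed hEd (splice π₁ π₂ i) i s c (π₂ i s c)))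
    (huniq : ∀ b₁ b₂ : A i,
      (∀ b, Q s (stepAct Ed hEd (splice π₁ π₂ i) i s c b) ≤
        Q s (stepAct Ed hEd (splice π₁ π₂ i) i s c b₁)) →
      (∀ b, Q s (stepAct Ed hEd (splice π₁ π₂ i) i s c b) ≤
        Q s (stepAct Ed hEd (splice π₁ π₂ i) i s c b₂)) → b₁ = b₂) :
    π₂ i s c = π₁ i s c := by
  have hsplice : ∀ j, i < j → splice π₁ π₂ i j = splice π₀ π₁ i j := fun j hij => by
    simp only [splice, if_neg (not_lt_of_gt hij), hgt j hij]
  obtain ⟨C₁, hC₁⟩ := exists_const_add_edgeSum_stepAct (hEd := hEd) hq hQ (splice π₀ π₁ i) i s c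
  obtain ⟨C₂, hC₂⟩ := exists_const_add_edgeSum_stepAct (hEd := hEd) hq hQ (splice π₁ π₂ i) i s c
  refine huniq _ _ hopt₂ fun b => ?_
  have h := hopt₁ b
  rw [hC₁, hC₁] at h
  rw [hC₂, hC₂, edgeSum_from_stepAct_congr hq hNd hsplice, edgeSum_from_stepAct_congr hq hNd hsplice]
  linarith

variable [Fintype St] [∀ i, Fintype (A i)] {P : St → (∀ i, A i) → St → ℝ}
  {r : St → (∀ i, A i) → ℝ} {γ : ℝ} {πseq : ℕ → ADPolicy Ed St A} {Vseq : ℕ → St → ℝ}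

theorem ADMPI.eventually_const (hADMPI : ADMPI P r γ Ed hEd πseq Vseq)
    (hSingle : SingletonArgmax P r γ Ed hEd πseq Vseq) {K₀ : ℕ} {V : St → ℝ}
    (hV : ∀ k ≥ K₀, Vseq k = V)
    (hq : ∀ u v, ¬(u < v ∧ Gc.Adj u v) → ∀ s x y, q u v s x y = 0)
    (hNd : ∀ k : Fin n, {j : Fin n | Ed j k} = ncSet Gc {j : Fin n | k ≤ j})
    (hQ : ∀ s a, QV P r γ V s a = ∑ u, ∑ v, q u v s (a u) (a v)) :
    ∀ k ≥ K₀ + n, πseq k = πseq (K₀ + n) := by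
  have hstab : ∀ i : Fin n, ∀ k ≥ K₀ + (n - i), πseq (k + 1) i = πseq k i := by
    intro i
    induction i using WellFoundedGT.induction with
    | _ i ih =>
      intro k hk
      obtain ⟨k, rfl⟩ : ∃ k', k = k' + 1 := ⟨k - 1, by omega⟩
      funext s c
      have hgt : ∀ j, i < j → πseq (k + 1) j = πseq k j :=
        fun j hij => ih j hij k (by have := Fin.lt_def.1 hij; omega)
      have hopt₁ := hADMPI.2 k i s c
      have hopt₂ := hADMPI.2 (k + 1) i s c
      rw [hV k (by omega)] at hopt₁
      have huniq := hSingle (k + 1) (by omega) i s c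
      rw [hV (k + 1) (by omega)] at hopt₂ huniq
      exact eq_of_stepOptimal_of_forall_gt hq hNd hQ hgt s c hopt₁ hopt₂ huniq
  intro k hk
  induction k, hk using Nat.le_induction with
  | base => rfl
  | succ k hk ih => exact (funext fun i => hstab i k (by omega)).trans ih

end Stabilization

section Bellman

variable [Fintype St] {P : St → (∀ i, A i) → St → ℝ} {r : St → (∀ i, A i) → ℝ} {γ : ℝ}

theorem abs_QV_sub_QV_le (hP0 : ∀ s a s', 0 ≤ P s a s') (hP1 : ∀ s a, ∑ s', P s a s' = 1)
    (hγ0 : 0 ≤ γ) (V W : St → ℝ) (s : St) (a : ∀ i, A i) :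
    |QV P r γ V s a - QV P r γ W s a| ≤ γ * ‖V - W‖ := by
  have hdiff : QV P r γ V s a - QV P r γ W s a = γ * ∑ s', P s a s' * (V - W) s' := by
    simp only [QV, Pi.sub_apply, mul_sub, sum_sub_distrib]
    ring
  rw [hdiff, abs_mul, abs_of_nonneg hγ0]
  gcongr
  calc |∑ s', P s a s' * (V - W) s'|
      ≤ ∑ s', P s a s' * ‖V - W‖ := by
        refine (abs_sum_le_sum_abs _ _).trans (sum_le_sum fun s' _ => ?_)
        rw [abs_mul, abs_of_nonneg (hP0 s a s'), ← Real.norm_eq_abs]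
        exact mul_le_mul_of_nonneg_left (norm_le_pi_norm (V - W) s') (hP0 s a s')
    _ = ‖V - W‖ := by rw [← sum_mul, hP1, one_mul]

theorem ciSup_le_ciSup_add {ι : Type*} [Finite ι] [Nonempty ι] {f g : ι → ℝ} {c : ℝ}
    (h : ∀ i, f i ≤ g i + c) : ⨆ i, f i ≤ (⨆ i, g i) + c :=
  ciSup_le fun i => (h i).trans (by gcongr; exact le_ciSup (Finite.bddAbove_range g) i)

/-- The Bellman optimality operator is a `γ`-contraction in the sup norm. -/
theorem eq_of_bellman [∀ i, Fintype (A i)] [∀ i, Nonempty (A i)]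
    (hP0 : ∀ s a s', 0 ≤ P s a s') (hP1 : ∀ s a, ∑ s', P s a s' = 1) (hγ0 : 0 ≤ γ) (hγ1 : γ < 1)
    {V W : St → ℝ} (hV : ∀ s, V s = ⨆ a : ∀ i, A i, QV P r γ V s a)
    (hW : ∀ s, W s = ⨆ a : ∀ i, A i, QV P r γ W s a) : V = W := by
  have hQ := abs_QV_sub_QV_le (r := r) hP0 hP1 hγ0
  have hcontr : ‖V - W‖ ≤ γ * ‖V - W‖ := by
    refine (pi_norm_le_iff_of_nonneg (by positivity)).2 fun s => ?_
    rw [Pi.sub_apply, Real.norm_eq_abs, hV, hW, abs_sub_le_iff, sub_le_iff_le_add,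
      sub_le_iff_le_add, add_comm _ (⨆ a, _), add_comm _ (⨆ a, _)]
    constructor <;> refine ciSup_le_ciSup_add fun a => ?_
    · linarith [(abs_sub_le_iff.1 (hQ V W s a)).1]
    · linarith [(abs_sub_le_iff.1 (hQ V W s a)).2]
  have hzero : ‖V - W‖ = 0 := by nlinarith [norm_nonneg (V - W)]
  exact sub_eq_zero.1 (norm_eq_zero.1 hzero)

end Bellman

end ADMPIConvergence

/-- relaxed convergence theorem: let `(πseq, Vseq)` be an execution of
Algorithm AD-MPI satisfying the singleton-argmax assumption, let `Vcirc` be the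
eventual constant value of the sequence `V^{π^k}`, and let `G_c` be a CG of
`Q^{Vcirc}`. If `N_d(i) = N_c(i^{[+]})` for every `i`, then the policy sequence
converges in finitely many terms to a policy `π°` whose value function is `Vcirc`
(i.e. `Vcirc` is the fixed point of `T_{π°}`), and `π°` is globally optimal:
`V^{π°} = Vcirc = V^*`. -/
theorem stmt13 {n : ℕ} {St : Type*} [Fintype St] {A : Fin n → Type*}
    [∀ i, Fintype (A i)] [∀ i, Nonempty (A i)]
    (P : St → (∀ i, A i) → St → ℝ) (r : St → (∀ i, A i) → ℝ) (γ : ℝ)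
    (hP0 : ∀ s a s', 0 ≤ P s a s') (hP1 : ∀ s a, ∑ s', P s a s' = 1)
    (hγ0 : 0 ≤ γ) (hγ1 : γ < 1)
    (Ed : Fin n → Fin n → Prop) [DecidableRel Ed]
    (hEd : ∀ i j : Fin n, Ed j i → j < i)
    (πseq : ℕ → (i : Fin n) → St → ((j : {j : Fin n // Ed j i}) → A j.1) → A i)
    (Vseq : ℕ → St → ℝ)
    (hADMPI : ADMPI P r γ Ed hEd πseq Vseq)
    (hSingle : SingletonArgmax P r γ Ed hEd πseq Vseq)
    (Vcirc : St → ℝ)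
    (hVcirc : ∃ K₀ : ℕ, ∀ k ≥ K₀, ∀ s, Vseq k s = Vcirc s)
    (Gc : SimpleGraph (Fin n))
    (hCG : IsCG Gc (QV P r γ Vcirc))
    (hNd : ∀ k : Fin n, {j : Fin n | Ed j k} = ncSet Gc {j : Fin n | k ≤ j})
    (Vstar : St → ℝ)
    (hVstar : ∀ s, Vstar s = ⨆ a : ∀ i, A i, QV P r γ Vstar s a) :
    ∃ (K : ℕ)
      (πcirc : (i : Fin n) → St → ((j : {j : Fin n // Ed j i}) → A j.1) → A i),
      (∀ k ≥ K, ∀ i : Fin n, πseq k i = πcirc i) ∧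
      (∀ (s : St) (a' : ∀ i, A i),
        QV P r γ Vcirc s (indAct Ed hEd πcirc ∅ a' s) = Vcirc s) ∧
      (∀ s, Vcirc s = Vstar s) := by
  obtain ⟨K₀, hK₀⟩ := hVcirc
  obtain ⟨q, hq, hQ⟩ := hCG
  have hV : ∀ k ≥ K₀, Vseq k = Vcirc := fun k hk => funext (hK₀ k hk)
  have hconst := hADMPI.eventually_const hSingle hV hq hNd hQ
  set K := K₀ + n
  have hvalue : ∀ s a', QV P r γ Vcirc s (indAct Ed hEd (πseq K) ∅ a' s) = Vcirc s := by
    intro s a'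
    rw [← hV K (by omega)]
    exact (hADMPI.1 K s a').symm
  have hopt : ∀ i s c b, QV P r γ Vcirc s (stepAct Ed hEd (πseq K) i s c b) ≤
      QV P r γ Vcirc s (stepAct Ed hEd (πseq K) i s c (πseq K i s c)) := by
    intro i s c b
    have h := hADMPI.2 K i s c b
    rwa [hV K (by omega), hconst (K + 1) (by omega), funext fun j => ite_self (πseq K j)] at h
  have hbellman : ∀ s, Vcirc s = ⨆ a : ∀ i, A i, QV P r γ Vcirc s a := fun s =>
    le_antisymm
      ((hvalue s (Classical.arbitrary _)).symm.le.trans (le_ciSup (Finite.bddAbove_range _) _))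
      (ciSup_le fun a => (le_indAct_of_stepOptimal hq hNd hQ hopt s a).trans (hvalue s a).le)
  exact ⟨K, πseq K, fun k hk i => congrFun (hconst k hk) i, hvalue,
    congrFun (eq_of_bellman hP0 hP1 hγ0 hγ1 hbellman hVstar)⟩
end

section
/- Let Q : S × A → ℝ be an arbitrary function, and let G_d be the fully dense ADG with edge set E_d = {(i,j) ∈ N × N : i < j}, so that N_d(i) = {1,…,i−1} for every i. If a stochastic action-dependent joint policy π associated with G_d is G_d-locally optimal with respect to Q, then E_π[Q(s, a)] = max_{a ∈ A} Q(s, a) for every s ∈ S. -/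
/-- Combine clamped values `a'` (on the coordinates in `F`) with free values `b`
(on the coordinates outside `F`) into a full joint action. -/
def comb {n : ℕ} {A : Fin n → Type*} (F : Finset (Fin n)) (a' : ∀ i, A i)
    (b : (j : {j : Fin n // j ∉ F}) → A j.1) : ∀ i, A i :=
  fun m => if h : m ∉ F then b ⟨m, h⟩ else a' m

/-- The clamped expectation `E_{π_{-F}}[f(s, a'_F, a_{-F})]`: the coordinates in `F`
are clamped to the values of `a'`, and the agents outside `F` draw their actions from
their (action-dependent) policies, each `π j` conditioning on the actions of its
in-neighbors `N_d(j) = {k | Ed k j}` in the combined action vector. -/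
def clampedExp {n : ℕ} {St : Type*} {A : Fin n → Type*} [∀ i, Fintype (A i)]
    (Ed : Fin n → Fin n → Prop) [DecidableRel Ed]
    (π : (i : Fin n) → St → ((j : {j : Fin n // Ed j i}) → A j.1) → A i → ℝ)
    (F : Finset (Fin n)) (s : St) (a' : ∀ i, A i)
    (f : (∀ i, A i) → ℝ) : ℝ :=
  ∑ b : (j : {j : Fin n // j ∉ F}) → A j.1,
    (∏ j : {j : Fin n // j ∉ F},
        π j.1 s (fun k => comb F a' b k.1) (b j)) * f (comb F a' b)

/-- `π` is a (stochastic action-dependent) joint policy: each conditional `π i s c`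
is a probability distribution on `A i`. -/
def IsPolicy {n : ℕ} {St : Type*} {A : Fin n → Type*} [∀ i, Fintype (A i)]
    (Ed : Fin n → Fin n → Prop)
    (π : (i : Fin n) → St → ((j : {j : Fin n // Ed j i}) → A j.1) → A i → ℝ) : Prop :=
  ∀ (i : Fin n) (s : St) (c : (j : {j : Fin n // Ed j i}) → A j.1),
    (∀ ai, 0 ≤ π i s c ai) ∧ ∑ ai, π i s c ai = 1

/-- `π` is `G_d`-locally optimal with respect to `Q`: for every agent `i`, state `s`,
and clamped values `a'` on `N_d(i)`,
`E_{π_{-N_d(i)}}[Q(s, a'_{N_d(i)}, a_{-N_d(i)})]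
  = max_{a_i} E_{π_{-N_d[i]}}[Q(s, a'_{N_d(i)}, a_i, a_{-N_d[i]})]`. -/
def GdLocallyOpt {n : ℕ} {St : Type*} {A : Fin n → Type*}
    [∀ i, Fintype (A i)] [∀ i, Nonempty (A i)]
    (Ed : Fin n → Fin n → Prop) [DecidableRel Ed]
    (π : (i : Fin n) → St → ((j : {j : Fin n // Ed j i}) → A j.1) → A i → ℝ)
    (Q : St → (∀ i, A i) → ℝ) : Prop :=
  ∀ (i : Fin n) (s : St) (a' : ∀ j, A j),
    clampedExp Ed π (Finset.univ.filter fun j => Ed j i) s a' (Q s)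
      = ⨆ ai : A i, clampedExp Ed π (Finset.univ.filter fun j => Ed j i ∨ j = i) s
          (Function.update a' i ai) (Q s)

/-! Backward induction over the agents. Once agents `0, …, k-1` are clamped, the clamped
expectation equals the maximum of `Q` over the actions of the remaining agents: at `k = n`
nothing is random, and local optimality of agent `k` rewrites the `k`-clamped expectation as
the maximum over `a_k` of the `(k+1)`-clamped one, where the maxima over `a_k` and over
`a_{>k}` merge into a single maximum over `a_{≥k}`. The case `k = 0` is the theorem. -/

open Finset Function

lemma Finset.piecewise_insert_update {ι : Type*} [DecidableEq ι] {π : ι → Type*}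
    {s : Finset ι} {i : ι} (hi : i ∉ s) (f g : ∀ j, π j) (x : π i) :
    (insert i s).piecewise (update f i x) g = s.piecewise f (update g i x) := by
  rw [piecewise_insert, update_self, ← s.update_piecewise_of_notMem _ _ hi,
    s.piecewise_congr (fun j hj => update_of_ne (ne_of_mem_of_not_mem hj hi) ..) fun _ _ => rfl]

lemma Finite.ciSup_ciSup_update {ι α : Type*} [DecidableEq ι] {β : ι → Type*}
    [∀ j, Finite (β j)] [∀ j, Nonempty (β j)] [Finite ι] [ConditionallyCompleteLattice α]
    (g : (∀ j, β j) → α) (i : ι) :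
    ⨆ x : β i, ⨆ b : ∀ j, β j, g (update b i x) = ⨆ b, g b := by
  rw [← Finite.ciSup_prod (fun p : β i × (∀ j, β j) => g (update p.2 i p.1))]
  exact Surjective.iSup_comp (fun b => ⟨(b i, b), update_eq_self i b⟩) g

lemma clampedExp_univ {n : ℕ} {St : Type*} {A : Fin n → Type*} [∀ i, Fintype (A i)]
    (Ed : Fin n → Fin n → Prop) [DecidableRel Ed]
    (π : (i : Fin n) → St → ((j : {j : Fin n // Ed j i}) → A j.1) → A i → ℝ)
    (s : St) (a' : ∀ i, A i) (f : (∀ i, A i) → ℝ) :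
    clampedExp Ed π univ s a' f = f a' := by
  have : IsEmpty {j : Fin n // j ∉ (univ : Finset (Fin n))} := ⟨fun j => j.2 (mem_univ _)⟩
  have hcomb (b) : comb univ a' b = a' := funext fun m => by simp [comb]
  simp [clampedExp, hcomb]

def agentsBelow (n k : ℕ) : Finset (Fin n) := univ.filter fun j => j.val < k

lemma agentsBelow_zero (n : ℕ) : agentsBelow n 0 = ∅ := by simp [agentsBelow]

lemma agentsBelow_self (n : ℕ) : agentsBelow n n = univ := filter_true_of_mem fun j _ => j.2

lemma agentsBelow_succ {n : ℕ} (i : Fin n) :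
    agentsBelow n (i + 1) = insert i (agentsBelow n i) := by
  ext j; simp [agentsBelow, Fin.ext_iff]; omega

lemma notMem_agentsBelow {n : ℕ} (i : Fin n) : i ∉ agentsBelow n i := by simp [agentsBelow]

lemma filter_lt_eq_agentsBelow {n : ℕ} (i : Fin n) : univ.filter (· < i) = agentsBelow n i := by
  ext; simp [agentsBelow]

lemma filter_lt_or_eq_eq_insert_agentsBelow {n : ℕ} (i : Fin n) :
    univ.filter (fun j => j < i ∨ j = i) = insert i (agentsBelow n i) := by
  ext; simp [agentsBelow, or_comm]

theorem clampedExp_agentsBelow_eq_ciSup {n : ℕ} {St : Type*} {A : Fin n → Type*}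
    [∀ i, Fintype (A i)] [∀ i, Nonempty (A i)] (Q : St → (∀ i, A i) → ℝ)
    (π : (i : Fin n) → St → ((j : {j : Fin n // j < i}) → A j.1) → A i → ℝ)
    (hopt : GdLocallyOpt (· < ·) π Q) (s : St) {k : ℕ} (hk : k ≤ n) (a' : ∀ j, A j) :
    clampedExp (· < ·) π (agentsBelow n k) s a' (Q s)
      = ⨆ b, Q s ((agentsBelow n k).piecewise a' b) := by
  induction hk using Nat.decreasingInduction generalizing a' with
  | self => rw [agentsBelow_self, clampedExp_univ]; simp only [piecewise_univ, ciSup_const]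
  | of_succ k hk ih =>
    obtain ⟨i, rfl⟩ : ∃ i : Fin n, i.val = k := ⟨⟨k, hk⟩, rfl⟩
    rw [agentsBelow_succ i] at ih
    calc clampedExp (· < ·) π (agentsBelow n i) s a' (Q s)
        = ⨆ x, clampedExp (· < ·) π (insert i (agentsBelow n i)) s (update a' i x) (Q s) := by
          rw [← filter_lt_or_eq_eq_insert_agentsBelow, ← filter_lt_eq_agentsBelow]
          exact hopt i s a'
      _ = ⨆ x, ⨆ b, Q s ((agentsBelow n i).piecewise a' (update b i x)) := by
          simp only [ih, piecewise_insert_update (notMem_agentsBelow i)]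
      _ = ⨆ b, Q s ((agentsBelow n i).piecewise a' b) :=
          Finite.ciSup_ciSup_update (fun b => Q s ((agentsBelow n i).piecewise a' b)) i

theorem stmt15_general {n : ℕ} {St : Type*} {A : Fin n → Type*}
    [∀ i, Fintype (A i)] [∀ i, Nonempty (A i)]
    (Q : St → (∀ i, A i) → ℝ)
    (π : (i : Fin n) → St → ((j : {j : Fin n // (fun a b : Fin n => a < b) j i}) → A j.1) → A i → ℝ)
    (hopt : GdLocallyOpt (fun a b : Fin n => a < b) π Q) :
    ∀ (s : St) (a' : ∀ j, A j),
      clampedExp (fun a b : Fin n => a < b) π ∅ s a' (Q s)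
        = ⨆ a : ∀ j, A j, Q s a := by
  intro s a'
  have h := clampedExp_agentsBelow_eq_ciSup Q π hopt s n.zero_le a'
  rw [agentsBelow_zero] at h
  simpa only [piecewise_empty] using h

/-- for the fully dense ADG, whose edge relation is
`Ed j i ↔ j < i` (so `N_d(i) = {1,…,i−1}`), any `G_d`-locally optimal stochastic
action-dependent joint policy `π` satisfies `E_π[Q(s,a)] = max_a Q(s,a)` for every
state `s` and any function `Q`. -/
theorem stmt15 {n : ℕ} {St : Type*} {A : Fin n → Type*}
    [∀ i, Fintype (A i)] [∀ i, Nonempty (A i)]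
    (Q : St → (∀ i, A i) → ℝ)
    (π : (i : Fin n) → St → ((j : {j : Fin n // (fun a b : Fin n => a < b) j i}) → A j.1) → A i → ℝ)
    (hπ : IsPolicy (fun a b : Fin n => a < b) π)
    (hopt : GdLocallyOpt (fun a b : Fin n => a < b) π Q) :
    ∀ (s : St) (a' : ∀ j, A j),
      clampedExp (fun a b : Fin n => a < b) π ∅ s a' (Q s)
        = ⨆ a : ∀ j, A j, Q s a :=
  stmt15_general Q π hopt
end
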